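/- Orthogonality of the primitive decomposition: under the stated hypotheses, for every integer a ≥ 0 the bilinear form β on H^{−a} defined by β(x, y) := ψ(x, N^a y) is nondegenerate, and for all non-negative integers s ≠ s′ and all p ∈ P^{−a−2s}, q ∈ P^{−a−2s′} one has β(N^s p, N^{s′} q) = 0. -/

import Mathlib

/-!
Since `N^a : H^{-a} → H^a` is bijective and `ψ` is perfect, `β` is nondegenerate. Skew-adjointness
of `N` moves powers of `N` across `ψ` at the cost of a sign, so
`β(N^s p, N^{s'} q) = ±ψ(p, N^{s+s'+a} q) = ±ψ(N^{s+s'+a} p, q)`. If `s < s'` then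
`s + s' + a ≥ a + 2s + 1`, and `N^{a+2s+1}` kills `p ∈ P^{-a-2s}`; symmetrically if `s' < s`.
-/

namespace LefschetzDecomposition

variable (H : ℤ → Type) [∀ a, AddCommGroup (H a)] [∀ a, Module ℚ (H a)]

/-- Transport along an equality of indices. -/
def hcast {a b : ℤ} (h : a = b) : H a ≃ₗ[ℚ] H b := by
  subst h; exact LinearEquiv.refl ℚ (H a)

variable (N : ∀ a : ℤ, H a →ₗ[ℚ] H (a + 2))

/-- The `n`-fold composite `N^n : H^a → H^{a + 2n}`. -/
noncomputable def Npow : (n : ℕ) → (a : ℤ) → (H a →ₗ[ℚ] H (a + 2 * n))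
  | 0, a => (hcast H (by push_cast; ring)).toLinearMap
  | n + 1, a =>
      (hcast H (show a + 2 + 2 * (n : ℕ) = a + 2 * ((n : ℕ) + 1) by push_cast; ring)).toLinearMap
        ∘ₗ Npow n (a + 2) ∘ₗ N a

/-- The `a`-fold composite `N^a : H^{-a} → H^a`. -/
noncomputable def Niter (a : ℕ) : H (-(a : ℤ)) →ₗ[ℚ] H (a : ℤ) :=
  (hcast H (show -(a : ℤ) + 2 * (a : ℕ) = (a : ℤ) by push_cast; ring)).toLinearMap
    ∘ₗ Npow H N a (-(a : ℤ))

/-- The primitive part in (nonpositive) degree `m`: for `m = -a` with `a ≥ 0` this is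
`P^{-a} = ker (N^{a+1} : H^{-a} → H^{a+2})`. -/
noncomputable def Pprim (m : ℤ) : Submodule ℚ (H m) :=
  LinearMap.ker (Npow H N (m.natAbs + 1) m)

/-- The map `N^s : H^{-a-2s} → H^{-a}`. -/
noncomputable def Nshift (a s : ℕ) : H (-(a : ℤ) - 2 * s) →ₗ[ℚ] H (-(a : ℤ)) :=
  (hcast H (show -(a : ℤ) - 2 * s + 2 * (s : ℕ) = -(a : ℤ) by push_cast; ring)).toLinearMap
    ∘ₗ Npow H N s (-(a : ℤ) - 2 * s)

lemma hcast_hcast {a b c : ℤ} (h₁ : a = b) (h₂ : b = c) (x : H a) :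
    hcast H h₂ (hcast H h₁ x) = hcast H (h₁.trans h₂) x := by
  subst h₁ h₂; rfl

lemma apply_hcast {g : ℤ → ℤ} (f : ∀ a, H a →ₗ[ℚ] H (g a)) {a b : ℤ} (h : a = b) (x : H a) :
    f b (hcast H h x) = hcast H (congrArg g h) (f a x) := by
  subst h; rfl

lemma Npow_zero_apply (a : ℤ) (x : H a) :
    Npow H N 0 a x = hcast H (by simp) x := rfl

lemma Npow_succ_apply (n : ℕ) (a : ℤ) (x : H a) :
    Npow H N (n + 1) a x = hcast H (by push_cast; ring) (Npow H N n (a + 2) (N a x)) :=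
  rfl

lemma Npow_succ_apply' (n : ℕ) (a : ℤ) (x : H a) :
    Npow H N (n + 1) a x = hcast H (by push_cast; ring) (N (a + 2 * n) (Npow H N n a x)) := by
  induction n generalizing a with
  | zero =>
    rw [Npow_succ_apply, Npow_zero_apply, Npow_zero_apply, apply_hcast, hcast_hcast, hcast_hcast]
  | succ n ih =>
    rw [Npow_succ_apply, ih, hcast_hcast, Npow_succ_apply, apply_hcast H N, hcast_hcast]

lemma Npow_Npow (m n : ℕ) (a : ℤ) (x : H a) :
    Npow H N n (a + 2 * m) (Npow H N m a x)
      = hcast H (by push_cast; ring) (Npow H N (m + n) a x) := by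
  induction n with
  | zero => rfl
  | succ n ih =>
    rw [Npow_succ_apply', ih, apply_hcast H N, hcast_hcast,
      show Npow H N (m + (n + 1)) a x = _ from Npow_succ_apply' H N (m + n) a x, hcast_hcast]

lemma Npow_eq_zero_of_le {k l : ℕ} (hkl : k ≤ l) {a : ℤ} {x : H a} (hx : Npow H N k a x = 0) :
    Npow H N l a x = 0 := by
  obtain ⟨n, rfl⟩ := Nat.exists_eq_add_of_le hkl
  have h := Npow_Npow H N k n a x
  rw [hx, map_zero, eq_comm, LinearEquiv.map_eq_zero_iff] at h
  exact h

lemma Npow_eq_zero_of_mem_Pprim {m : ℤ} {x : H m} (hx : x ∈ Pprim H N m) {k : ℕ}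
    (hk : m.natAbs < k) : Npow H N k m x = 0 :=
  Npow_eq_zero_of_le H N hk hx

lemma Npow_Nshift (a s : ℕ) (x : H (-(a : ℤ) - 2 * s)) :
    Npow H N a (-(a : ℤ)) (Nshift H N a s x)
      = hcast H (by push_cast; ring) (Npow H N (s + a) (-(a : ℤ) - 2 * s) x) := by
  rw [Nshift, LinearMap.comp_apply, LinearEquiv.coe_coe, apply_hcast H (Npow H N a), Npow_Npow,
    hcast_hcast]

lemma Npow_bijective_iff_Niter_bijective (a : ℕ) :
    Function.Bijective (Npow H N a (-(a : ℤ))) ↔ Function.Bijective (Niter H N a) :=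
  ((hcast H _).bijective.of_comp_iff' _).symm

variable (ψ : ∀ u v : ℤ, H u →ₗ[ℚ] H v →ₗ[ℚ] ℚ)

def IsSkewAdjoint : Prop :=
  ∀ u v : ℤ, u + v + 2 = 0 → ∀ (x : H u) (y : H v),
    ψ (u + 2) v (N u x) y + ψ u (v + 2) x (N v y) = 0

lemma psi_hcast_left {u u' : ℤ} (h : u = u') {v : ℤ} (x : H u) (y : H v) :
    ψ u' v (hcast H h x) y = ψ u v x y := by
  subst h; rfl

lemma psi_hcast_right {u : ℤ} {v v' : ℤ} (h : v = v') (x : H u) (y : H v) :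
    ψ u v' x (hcast H h y) = ψ u v x y := by
  subst h; rfl

variable {H N ψ}

lemma IsSkewAdjoint.psi_Npow_left (hN : IsSkewAdjoint H N ψ) (k : ℕ) {u v : ℤ}
    (huv : u + v + 2 * k = 0) (x : H u) (y : H v) :
    ψ (u + 2 * k) v (Npow H N k u x) y = (-1) ^ k * ψ u (v + 2 * k) x (Npow H N k v y) := by
  induction k generalizing u with
  | zero =>
    rw [Npow_zero_apply, Npow_zero_apply, psi_hcast_left, psi_hcast_right, pow_zero, one_mul]
  | succ k ih =>
    have hstep := hN u (v + 2 * k) (by push_cast at huv; linarith) x (Npow H N k v y)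
    rw [Npow_succ_apply, psi_hcast_left, ih (by push_cast at huv ⊢; linarith),
      Npow_succ_apply' H N k v, psi_hcast_right, pow_succ, eq_neg_of_add_eq_zero_left hstep]
    ring

lemma IsSkewAdjoint.psi_Npow_right (hN : IsSkewAdjoint H N ψ) (k : ℕ) {u v : ℤ}
    (huv : u + v + 2 * k = 0) (x : H u) (y : H v) :
    ψ u (v + 2 * k) x (Npow H N k v y) = (-1) ^ k * ψ (u + 2 * k) v (Npow H N k u x) y := by
  rw [hN.psi_Npow_left k huv, ← mul_assoc, ← mul_pow]
  norm_num

lemma IsSkewAdjoint.psi_Npow_Npow_eq_zero_of_left (hN : IsSkewAdjoint H N ψ) {m n : ℕ} {u v : ℤ}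
    (huv : u + v + 2 * (m + n) = 0) {x : H u} (hx : Npow H N (m + n) u x = 0) (y : H v) :
    ψ (u + 2 * m) (v + 2 * n) (Npow H N m u x) (Npow H N n v y) = 0 := by
  rw [hN.psi_Npow_right n (by linarith), Npow_Npow, hx, map_zero, map_zero,
    LinearMap.zero_apply, mul_zero]

lemma IsSkewAdjoint.psi_Npow_Npow_eq_zero_of_right (hN : IsSkewAdjoint H N ψ) {m n : ℕ} {u v : ℤ}
    (huv : u + v + 2 * (m + n) = 0) (x : H u) {y : H v} (hy : Npow H N (n + m) v y = 0) :
    ψ (u + 2 * m) (v + 2 * n) (Npow H N m u x) (Npow H N n v y) = 0 := by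
  rw [hN.psi_Npow_left m (by linarith), Npow_Npow, hy, map_zero, map_zero, mul_zero]

end LefschetzDecomposition

open LefschetzDecomposition in
theorem primitive_decomposition_orthogonality_general
    (H : ℤ → Type) [∀ a, AddCommGroup (H a)] [∀ a, Module ℚ (H a)]
    (N : ∀ a : ℤ, H a →ₗ[ℚ] H (a + 2))
    (hHL : ∀ a : ℕ, Function.Bijective (Niter H N a))
    (ψ : ∀ u v : ℤ, H u →ₗ[ℚ] H v →ₗ[ℚ] ℚ)
    (hψl : ∀ u v : ℤ, u + v = 0 → ∀ x : H u, (∀ y : H v, ψ u v x y = 0) → x = 0)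
    (hψr : ∀ u v : ℤ, u + v = 0 → ∀ y : H v, (∀ x : H u, ψ u v x y = 0) → y = 0)
    (hψN : ∀ u v : ℤ, u + v + 2 = 0 → ∀ (x : H u) (y : H v),
      ψ (u + 2) v (N u x) y + ψ u (v + 2) x (N v y) = 0) :
    ∀ a : ℕ,
      (∀ x : H (-(a : ℤ)),
        (∀ y : H (-(a : ℤ)),
          ψ (-(a : ℤ)) (-(a : ℤ) + 2 * (a : ℕ)) x (Npow H N a (-(a : ℤ)) y) = 0) → x = 0) ∧
      (∀ y : H (-(a : ℤ)),
        (∀ x : H (-(a : ℤ)),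
          ψ (-(a : ℤ)) (-(a : ℤ) + 2 * (a : ℕ)) x (Npow H N a (-(a : ℤ)) y) = 0) → y = 0) ∧
      (∀ s s' : ℕ, s ≠ s' →
        ∀ p ∈ Pprim H N (-(a : ℤ) - 2 * s), ∀ q ∈ Pprim H N (-(a : ℤ) - 2 * s'),
          ψ (-(a : ℤ)) (-(a : ℤ) + 2 * (a : ℕ)) (Nshift H N a s p)
            (Npow H N a (-(a : ℤ)) (Nshift H N a s' q)) = 0) := by
  intro a
  have hbij : Function.Bijective (Npow H N a (-(a : ℤ))) :=
    (Npow_bijective_iff_Niter_bijective H N a).mpr (hHL a)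
  have hdeg : -(a : ℤ) + (-(a : ℤ) + 2 * (a : ℕ)) = 0 := by ring
  refine ⟨fun x hx => ?_, fun y hy => ?_, fun s s' hss' p hp q hq => ?_⟩
  · refine hψl _ _ hdeg x fun z => ?_
    obtain ⟨y, rfl⟩ := hbij.surjective z
    exact hx y
  · exact hbij.injective ((hψr _ _ hdeg _ hy).trans (map_zero _).symm)
  · have hN : IsSkewAdjoint H N ψ := hψN
    rw [Npow_Nshift, Nshift, LinearMap.comp_apply, LinearEquiv.coe_coe, psi_hcast_left,
      psi_hcast_right]
    rcases hss'.lt_or_gt with hlt | hgt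
    · exact hN.psi_Npow_Npow_eq_zero_of_left (by push_cast; ring)
        (Npow_eq_zero_of_mem_Pprim H N hp (by omega)) _
    · exact hN.psi_Npow_Npow_eq_zero_of_right (by push_cast; ring) _
        (Npow_eq_zero_of_mem_Pprim H N hq (by omega))

open LefschetzDecomposition in
/-- **Orthogonality of the primitive decomposition.**  Let `(H^a)` be a bounded family of
finite-dimensional `ℚ`-vector spaces with maps `N : H^a → H^{a+2}` satisfying hard Lefschetz, and
nondegenerate pairings `ψ : H^{-a} × H^a → ℚ` (presented as a family `ψ u v`, meaningful when
`u + v = 0`) satisfying `ψ(Nx, y) + ψ(x, Ny) = 0`.  Then for every `a ≥ 0` the bilinear form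
`β(x, y) := ψ(x, N^a y)` on `H^{-a}` is nondegenerate, and for `s ≠ s'` the pieces
`N^s P^{-a-2s}` and `N^{s'} P^{-a-2s'}` are `β`-orthogonal. -/
theorem primitive_decomposition_orthogonality
    (H : ℤ → Type) [∀ a, AddCommGroup (H a)] [∀ a, Module ℚ (H a)]
    [∀ a, FiniteDimensional ℚ (H a)]
    (hbdd : ∃ n : ℕ, ∀ a : ℤ, (n : ℤ) ≤ |a| → ∀ x : H a, x = 0)
    (N : ∀ a : ℤ, H a →ₗ[ℚ] H (a + 2))
    (hHL : ∀ a : ℕ, Function.Bijective (Niter H N a))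
    (ψ : ∀ u v : ℤ, H u →ₗ[ℚ] H v →ₗ[ℚ] ℚ)
    (hψl : ∀ u v : ℤ, u + v = 0 → ∀ x : H u, (∀ y : H v, ψ u v x y = 0) → x = 0)
    (hψr : ∀ u v : ℤ, u + v = 0 → ∀ y : H v, (∀ x : H u, ψ u v x y = 0) → y = 0)
    (hψN : ∀ u v : ℤ, u + v + 2 = 0 → ∀ (x : H u) (y : H v),
      ψ (u + 2) v (N u x) y + ψ u (v + 2) x (N v y) = 0) :
    ∀ a : ℕ,
      (∀ x : H (-(a : ℤ)),
        (∀ y : H (-(a : ℤ)),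
          ψ (-(a : ℤ)) (-(a : ℤ) + 2 * (a : ℕ)) x (Npow H N a (-(a : ℤ)) y) = 0) → x = 0) ∧
      (∀ y : H (-(a : ℤ)),
        (∀ x : H (-(a : ℤ)),
          ψ (-(a : ℤ)) (-(a : ℤ) + 2 * (a : ℕ)) x (Npow H N a (-(a : ℤ)) y) = 0) → y = 0) ∧
      (∀ s s' : ℕ, s ≠ s' →
        ∀ p ∈ Pprim H N (-(a : ℤ) - 2 * s), ∀ q ∈ Pprim H N (-(a : ℤ) - 2 * s'),
          ψ (-(a : ℤ)) (-(a : ℤ) + 2 * (a : ℕ)) (Nshift H N a s p)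
            (Npow H N a (-(a : ℤ)) (Nshift H N a s' q)) = 0) :=
  primitive_decomposition_orthogonality_general H N hHL ψ hψl hψr hψN
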